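/- arXiv:2412.14813 — 5 statements merged into one kernel-verified Lean document; each statement's English description precedes it below -/
import Mathlib

section
/- Every minimizer μ* = ρ*·m of the free energy F_γ over Borel probability measures on M has an m-essentially bounded density: ρ*(x) ≤ exp(12 γ (W_max − W_min) + 4) for m-almost every x, where W_max and W_min denote the maximum and minimum of W on M × M. -/
open MeasureTheory
open scoped Classical ENNReal

/-- The relative entropy `E(μ) = ∫ ρ log ρ dm` if `μ ≪ m` (with density `ρ`), `+∞` otherwise. -/
noncomputable def entropy {M : Type*} [MeasurableSpace M] (m μ : Measure M) : EReal :=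
  if μ ≪ m ∧
      Integrable (fun x => ((μ.rnDeriv m x).toReal) * Real.log ((μ.rnDeriv m x).toReal)) m
  then ((∫ x, ((μ.rnDeriv m x).toReal) * Real.log ((μ.rnDeriv m x).toReal) ∂m : ℝ) : EReal)
  else ⊤

/-- The interaction energy `I(μ) = (1/2) ∫∫ W(x,y) dμ(x) dμ(y)`. -/
noncomputable def interactionEnergy {M : Type*} [MeasurableSpace M]
    (W : M → M → ℝ) (μ : Measure M) : ℝ :=
  (1 / 2) * ∫ x, ∫ y, W x y ∂μ ∂μ

/-- The free energy `F_γ(μ) = γ⁻¹ E(μ) + I(μ)`. -/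
noncomputable def freeEnergy {M : Type*} [MeasurableSpace M]
    (m : Measure M) (W : M → M → ℝ) (γ : ℝ) (μ : Measure M) : EReal :=
  ((γ⁻¹ : ℝ) : EReal) * entropy m μ + ((interactionEnergy W μ : ℝ) : EReal)


open scoped NNReal
open Real

section auxlemmas
variable {M : Type*} [MeasurableSpace M]

lemma aux_neg_one_le_mul_log {t : ℝ} (ht : 0 ≤ t) : -1 ≤ t * Real.log t := by
  rcases eq_or_lt_of_le ht with h|h
  · simp [← h]
  rcases le_total t 1 with h1|h1
  · have := Real.abs_log_mul_self_lt t h h1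
    have := abs_lt.1 this
    nlinarith [this.1]
  · have : 0 ≤ Real.log t := Real.log_nonneg h1
    nlinarith

lemma aux_one_sub_inv_le_log {x : ℝ} (hx : 0 < x) : 1 - x⁻¹ ≤ Real.log x := by
  have h := Real.log_le_sub_one_of_pos (inv_pos.mpr hx)
  rw [Real.log_inv] at h
  linarith

lemma aux_abs_mul_log_le {t B : ℝ} (ht : 0 ≤ t) (htB : t ≤ B) (hB : 1 ≤ B) :
    |t * Real.log t| ≤ 1 + B * Real.log B := by
  have hBl : 0 ≤ B * Real.log B := mul_nonneg (by linarith) (Real.log_nonneg hB)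
  rcases eq_or_lt_of_le ht with h|h
  · simp [← h]; linarith
  rcases le_total t 1 with h1|h1
  · have := abs_lt.1 (Real.abs_log_mul_self_lt t h h1)
    rw [abs_le]; constructor <;> nlinarith [this.1, this.2]
  · have hl : 0 ≤ Real.log t := Real.log_nonneg h1
    have : t * Real.log t ≤ B * Real.log B := by
      have := Real.log_le_log (by linarith : (0:ℝ) < t) htB
      nlinarith
    rw [abs_of_nonneg (by positivity)]
    linarith

lemma aux_gain {t K : ℝ} (hK : 0 < K) (ht : 0 ≤ t) :
    Real.log K * (t - min t K) ≤ t * Real.log t - min t K * Real.log (min t K) := by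
  rcases le_total t K with h|h
  · simp [min_eq_left h]
  · rw [min_eq_right h]
    have h1 : Real.log K ≤ Real.log t := Real.log_le_log hK h
    nlinarith [sub_nonneg.mpr h]
lemma aux_wd_iter (m : Measure M) (W : M → M → ℝ)
    (f : M → ℝ) (hf : Measurable f) (h0 : ∀ x, 0 ≤ f x) :
    (∫ x, ∫ y, W x y ∂(m.withDensity fun x => ENNReal.ofReal (f x))
        ∂(m.withDensity fun x => ENNReal.ofReal (f x)))
      = ∫ x, f x * ∫ y, f y * W x y ∂m ∂m := by
  have hmeq : (m.withDensity fun x => ENNReal.ofReal (f x))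
      = m.withDensity fun x => (((fun x => (f x).toNNReal) x : ℝ≥0) : ℝ≥0∞) := rfl
  rw [hmeq, integral_withDensity_eq_integral_smul hf.real_toNNReal]
  refine integral_congr_ae (.of_forall fun x => ?_)
  show (f x).toNNReal • (∫ y, W x y ∂(m.withDensity fun x => (((f x).toNNReal : ℝ≥0) : ℝ≥0∞)))
      = f x * ∫ y, f y * W x y ∂m
  rw [integral_withDensity_eq_integral_smul hf.real_toNNReal]
  have hx : ((f x).toNNReal : ℝ) = f x := Real.coe_toNNReal _ (h0 x)
  simp only [NNReal.smul_def, hx]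
  congr 1
  refine integral_congr_ae (.of_forall fun y => ?_)
  simp [NNReal.smul_def, Real.coe_toNNReal _ (h0 y)]

lemma aux_iter_bounds (η : Measure M) [IsProbabilityMeasure η] (W : M → M → ℝ)
    (hWm : StronglyMeasurable fun p : M × M => W p.1 p.2)
    (Wmin Wmax : ℝ) (hge : ∀ x y, Wmin ≤ W x y) (hle : ∀ x y, W x y ≤ Wmax) :
    Wmin ≤ (∫ x, ∫ y, W x y ∂η ∂η) ∧ (∫ x, ∫ y, W x y ∂η ∂η) ≤ Wmax := by
  set C := max |Wmin| |Wmax| with hC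
  have hWabs : ∀ x y, ‖W x y‖ ≤ C := by
    intro x y
    rw [Real.norm_eq_abs, abs_le]
    constructor
    · have := hge x y; have := neg_abs_le Wmin; have := le_max_left |Wmin| |Wmax|; linarith
    · have := hle x y; have := le_abs_self Wmax; have := le_max_right |Wmin| |Wmax|; linarith
  have hWsm : ∀ x : M, AEStronglyMeasurable (fun y => W x y) η := fun x =>
    (hWm.comp_measurable measurable_prodMk_left).aestronglyMeasurable
  have hint : ∀ x, Integrable (fun y => W x y) η := fun x =>
    Integrable.mono' (integrable_const C) (hWsm x) (Filter.Eventually.of_forall (hWabs x))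
  have hconst : ∀ c : ℝ, ∫ _ : M, c ∂η = c := by intro c; simp
  have hinner_lb : ∀ x, Wmin ≤ ∫ y, W x y ∂η := fun x => by
    rw [← hconst Wmin]; exact integral_mono (integrable_const _) (hint x) (fun y => hge x y)
  have hinner_ub : ∀ x, (∫ y, W x y ∂η) ≤ Wmax := fun x => by
    rw [← hconst Wmax]; exact integral_mono (hint x) (integrable_const _) (fun y => hle x y)
  have houter_meas : AEStronglyMeasurable (fun x => ∫ y, W x y ∂η) η :=
    hWm.integral_prod_right'.aestronglyMeasurable
  have houter_int : Integrable (fun x => ∫ y, W x y ∂η) η := by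
    refine Integrable.mono' (integrable_const C) houter_meas (Filter.Eventually.of_forall fun x => ?_)
    rw [Real.norm_eq_abs, abs_le]
    constructor
    · have := hinner_lb x; have := neg_abs_le Wmin; have := le_max_left |Wmin| |Wmax|; linarith
    · have := hinner_ub x; have := le_abs_self Wmax; have := le_max_right |Wmin| |Wmax|; linarith
  constructor
  · rw [← hconst Wmin]; exact integral_mono (integrable_const _) houter_int hinner_lb
  · rw [← hconst Wmax]; exact integral_mono houter_int (integrable_const _) hinner_ub
lemma aux_D_diff (m : Measure M) [IsProbabilityMeasure m] (W : M → M → ℝ)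
    (hWm : StronglyMeasurable fun p : M × M => W p.1 p.2)
    (Wmin Wmax : ℝ) (hge : ∀ x y, Wmin ≤ W x y) (hle : ∀ x y, W x y ≤ Wmax)
    (f₁ f₂ : M → ℝ) (hm₁ : Measurable f₁) (hm₂ : Measurable f₂)
    (h0₁ : ∀ x, 0 ≤ f₁ x) (h0₂ : ∀ x, 0 ≤ f₂ x)
    (hi₁ : Integrable f₁ m) (hi₂ : Integrable f₂ m)
    (h1₁ : ∫ x, f₁ x ∂m = 1) (h1₂ : ∫ x, f₂ x ∂m = 1) :
    |(∫ x, f₁ x * ∫ y, f₁ y * W x y ∂m ∂m) - (∫ x, f₂ x * ∫ y, f₂ y * W x y ∂m ∂m)|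
      ≤ 2 * (Wmax - Wmin) * ∫ x, |f₁ x - f₂ x| ∂m := by
  set Δ := Wmax - Wmin with hΔdef
  set L := ∫ x, |f₁ x - f₂ x| ∂m with hLdef
  have hL0 : 0 ≤ L := integral_nonneg fun x => abs_nonneg _
  set C := max |Wmin| |Wmax| with hC
  have hWabs : ∀ x y, |W x y| ≤ C := by
    intro x y; rw [abs_le]
    constructor
    · have := hge x y; have := neg_abs_le Wmin; have := le_max_left |Wmin| |Wmax|; linarith
    · have := hle x y; have := le_abs_self Wmax; have := le_max_right |Wmin| |Wmax|; linarith
  have hWslice : ∀ x : M, Measurable (fun y => W x y) :=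
    fun x => hWm.measurable.comp measurable_prodMk_left
  -- integrability of y ↦ fᵢ y * W x y
  have hint : ∀ (f : M → ℝ), Measurable f → (∀ x, 0 ≤ f x) → Integrable f m →
      ∀ x, Integrable (fun y => f y * W x y) m := by
    intro f hfm hf0 hfi x
    refine Integrable.mono' (hfi.const_mul C) ((hfm.mul (hWslice x)).aestronglyMeasurable)
      (Filter.Eventually.of_forall fun y => ?_)
    rw [Real.norm_eq_abs, abs_mul, abs_of_nonneg (hf0 y), mul_comm C (f y)]
    exact mul_le_mul_of_nonneg_left (hWabs x y) (hf0 y)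
  have hint₁ := hint f₁ hm₁ h0₁ hi₁
  have hint₂ := hint f₂ hm₂ h0₂ hi₂
  set H₁ := fun x => ∫ y, f₁ y * W x y ∂m with hH₁
  set H₂ := fun x => ∫ y, f₂ y * W x y ∂m with hH₂
  have hconstmul : ∀ (f : M → ℝ), (∫ x, f x ∂m) = 1 → ∀ c : ℝ, ∫ x, f x * c ∂m = c := by
    intro f hf c; rw [integral_mul_const, hf, one_mul]
  have hHb : ∀ (f : M → ℝ), Measurable f → (∀ x, 0 ≤ f x) → Integrable f m →
      (∫ x, f x ∂m) = 1 → ∀ x, Wmin ≤ (∫ y, f y * W x y ∂m) ∧ (∫ y, f y * W x y ∂m) ≤ Wmax := by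
    intro f hfm hf0 hfi hf1 x
    constructor
    · rw [← hconstmul f hf1 Wmin]
      exact integral_mono (hfi.mul_const _) (hint f hfm hf0 hfi x)
        (fun y => mul_le_mul_of_nonneg_left (hge x y) (hf0 y))
    · rw [← hconstmul f hf1 Wmax]
      exact integral_mono (hint f hfm hf0 hfi x) (hfi.mul_const _)
        (fun y => mul_le_mul_of_nonneg_left (hle x y) (hf0 y))
  have hH₁b := hHb f₁ hm₁ h0₁ hi₁ h1₁
  have hH₂b := hHb f₂ hm₂ h0₂ hi₂ h1₂
  have hdiffint : Integrable (fun x => f₁ x - f₂ x) m := hi₁.sub hi₂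
  have hdiff0 : ∫ x, (f₁ x - f₂ x) ∂m = 0 := by
    rw [integral_sub hi₁ hi₂, h1₁, h1₂]; ring
  -- |H₁ x - H₂ x| ≤ Δ * L
  have hHdiff : ∀ x, |H₁ x - H₂ x| ≤ Δ * L := by
    intro x
    have e1 : H₁ x - H₂ x = ∫ y, (f₁ y - f₂ y) * W x y ∂m := by
      rw [hH₁, hH₂, ← integral_sub (hint₁ x) (hint₂ x)]
      simp_rw [sub_mul]
    have e2 : (∫ y, (f₁ y - f₂ y) * Wmin ∂m) = 0 := by
      rw [integral_mul_const, hdiff0, zero_mul]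
    have hintd : Integrable (fun y => (f₁ y - f₂ y) * W x y) m := by
      have := (hint₁ x).sub (hint₂ x)
      simpa [sub_mul, Pi.sub_def] using this
    have e3 : H₁ x - H₂ x = ∫ y, (f₁ y - f₂ y) * (W x y - Wmin) ∂m := by
      rw [e1, ← sub_zero (∫ y, (f₁ y - f₂ y) * W x y ∂m), ← e2,
        ← integral_sub hintd (hdiffint.mul_const _)]
      simp_rw [mul_sub]
    rw [e3]
    calc |∫ y, (f₁ y - f₂ y) * (W x y - Wmin) ∂m|
        = ‖∫ y, (f₁ y - f₂ y) * (W x y - Wmin) ∂m‖ := (Real.norm_eq_abs _).symm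
      _ ≤ ∫ y, ‖(f₁ y - f₂ y) * (W x y - Wmin)‖ ∂m := norm_integral_le_integral_norm _
      _ = ∫ y, |(f₁ y - f₂ y) * (W x y - Wmin)| ∂m := by simp [abs_mul]
      _ ≤ ∫ y, |f₁ y - f₂ y| * Δ ∂m := by
          refine integral_mono ?_ (hdiffint.abs.mul_const _) fun y => ?_
          · have : Integrable (fun y => (f₁ y - f₂ y) * (W x y - Wmin)) m := by
              have := hintd.sub (hdiffint.mul_const Wmin)
              simpa [mul_sub, Pi.sub_def] using this
            exact this.abs
          · rw [abs_mul]
            refine mul_le_mul_of_nonneg_left ?_ (abs_nonneg _)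
            rw [abs_of_nonneg (by linarith [hge x y])]
            have := hle x y; rw [hΔdef]; linarith
      _ = Δ * L := by rw [integral_mul_const, hLdef]; ring
  -- measurability of H₁
  have hH₁meas : AEStronglyMeasurable H₁ m := by
    have : StronglyMeasurable (fun p : M × M => f₁ p.2 * W p.1 p.2) :=
      ((hm₁.comp measurable_snd).stronglyMeasurable).mul hWm
    exact this.integral_prod_right'.aestronglyMeasurable
  have hH₂meas : AEStronglyMeasurable H₂ m := by
    have : StronglyMeasurable (fun p : M × M => f₂ p.2 * W p.1 p.2) :=
      ((hm₂.comp measurable_snd).stronglyMeasurable).mul hWm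
    exact this.integral_prod_right'.aestronglyMeasurable
  have hH₁abs : ∀ x, |H₁ x| ≤ C := by
    intro x; rw [abs_le]
    constructor
    · have := (hH₁b x).1; have := neg_abs_le Wmin; have := le_max_left |Wmin| |Wmax|; linarith
    · have := (hH₁b x).2; have := le_abs_self Wmax; have := le_max_right |Wmin| |Wmax|; linarith
  have hint_fH₁ : ∀ (f : M → ℝ), Measurable f → (∀ x, 0 ≤ f x) → Integrable f m →
      Integrable (fun x => f x * H₁ x) m := by
    intro f hfm hf0 hfi
    refine Integrable.mono' (hfi.const_mul C) ((hfm.aestronglyMeasurable).mul hH₁meas)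
      (Filter.Eventually.of_forall fun x => ?_)
    rw [Real.norm_eq_abs, abs_mul, abs_of_nonneg (hf0 x), mul_comm C (f x)]
    exact mul_le_mul_of_nonneg_left (hH₁abs x) (hf0 x)
  have hint_f₁H₁ := hint_fH₁ f₁ hm₁ h0₁ hi₁
  have hint_f₂H₁ := hint_fH₁ f₂ hm₂ h0₂ hi₂
  have hint_dH₁ : Integrable (fun x => (f₁ x - f₂ x) * H₁ x) m := by
    have := hint_f₁H₁.sub hint_f₂H₁
    simpa [sub_mul, Pi.sub_def] using this
  have hint_f₂Hd : Integrable (fun x => f₂ x * (H₁ x - H₂ x)) m := by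
    refine Integrable.mono' (hi₂.const_mul (Δ * L))
      ((hm₂.aestronglyMeasurable).mul (hH₁meas.sub hH₂meas))
      (Filter.Eventually.of_forall fun x => ?_)
    rw [Real.norm_eq_abs, abs_mul, abs_of_nonneg (h0₂ x), mul_comm (Δ * L) (f₂ x)]
    exact mul_le_mul_of_nonneg_left (hHdiff x) (h0₂ x)
  have hint_f₂H₂ : Integrable (fun x => f₂ x * H₂ x) m := by
    refine (hint_f₂H₁.sub hint_f₂Hd).congr (Filter.Eventually.of_forall fun x => ?_)
    simp only [Pi.sub_apply]
    ring
  -- the split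
  have hsplit : (∫ x, f₁ x * H₁ x ∂m) - (∫ x, f₂ x * H₂ x ∂m)
      = (∫ x, (f₁ x - f₂ x) * H₁ x ∂m) + ∫ x, f₂ x * (H₁ x - H₂ x) ∂m := by
    rw [← integral_sub hint_f₁H₁ hint_f₂H₂, ← integral_add hint_dH₁ hint_f₂Hd]
    refine integral_congr_ae (.of_forall fun x => ?_)
    ring
  -- term 1
  have hterm1 : |∫ x, (f₁ x - f₂ x) * H₁ x ∂m| ≤ Δ * L := by
    have e2 : (∫ x, (f₁ x - f₂ x) * Wmin ∂m) = 0 := by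
      rw [integral_mul_const, hdiff0, zero_mul]
    have hintd2 : Integrable (fun x => (f₁ x - f₂ x) * (H₁ x - Wmin)) m := by
      have := hint_dH₁.sub (hdiffint.mul_const Wmin)
      simpa [mul_sub, Pi.sub_def] using this
    have e3 : (∫ x, (f₁ x - f₂ x) * H₁ x ∂m) = ∫ x, (f₁ x - f₂ x) * (H₁ x - Wmin) ∂m := by
      rw [← sub_zero (∫ x, (f₁ x - f₂ x) * H₁ x ∂m), ← e2,
        ← integral_sub hint_dH₁ (hdiffint.mul_const _)]
      simp_rw [mul_sub]
    rw [e3]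
    calc |∫ x, (f₁ x - f₂ x) * (H₁ x - Wmin) ∂m|
        = ‖∫ x, (f₁ x - f₂ x) * (H₁ x - Wmin) ∂m‖ := (Real.norm_eq_abs _).symm
      _ ≤ ∫ x, ‖(f₁ x - f₂ x) * (H₁ x - Wmin)‖ ∂m := norm_integral_le_integral_norm _
      _ = ∫ x, |(f₁ x - f₂ x) * (H₁ x - Wmin)| ∂m := by simp [abs_mul]
      _ ≤ ∫ x, |f₁ x - f₂ x| * Δ ∂m := by
          refine integral_mono hintd2.abs (hdiffint.abs.mul_const _) fun x => ?_
          rw [abs_mul]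
          refine mul_le_mul_of_nonneg_left ?_ (abs_nonneg _)
          rw [abs_of_nonneg (by linarith [(hH₁b x).1])]
          have := (hH₁b x).2; rw [hΔdef]
          simp only [hH₁]
          linarith
      _ = Δ * L := by rw [integral_mul_const, hLdef]; ring
  -- term 2
  have hterm2 : |∫ x, f₂ x * (H₁ x - H₂ x) ∂m| ≤ Δ * L := by
    calc |∫ x, f₂ x * (H₁ x - H₂ x) ∂m|
        = ‖∫ x, f₂ x * (H₁ x - H₂ x) ∂m‖ := (Real.norm_eq_abs _).symm
      _ ≤ ∫ x, ‖f₂ x * (H₁ x - H₂ x)‖ ∂m := norm_integral_le_integral_norm _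
      _ = ∫ x, |f₂ x * (H₁ x - H₂ x)| ∂m := by simp [abs_mul]
      _ ≤ ∫ x, f₂ x * (Δ * L) ∂m := by
          refine integral_mono hint_f₂Hd.abs (hi₂.mul_const _) fun x => ?_
          rw [abs_mul, abs_of_nonneg (h0₂ x)]
          exact mul_le_mul_of_nonneg_left (hHdiff x) (h0₂ x)
      _ = Δ * L := hconstmul f₂ h1₂ _
  calc |(∫ x, f₁ x * H₁ x ∂m) - (∫ x, f₂ x * H₂ x ∂m)|
      = |(∫ x, (f₁ x - f₂ x) * H₁ x ∂m) + ∫ x, f₂ x * (H₁ x - H₂ x) ∂m| := by rw [hsplit]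
    _ ≤ |∫ x, (f₁ x - f₂ x) * H₁ x ∂m| + |∫ x, f₂ x * (H₁ x - H₂ x) ∂m| := abs_add_le _ _
    _ ≤ Δ * L + Δ * L := add_le_add hterm1 hterm2
    _ = 2 * Δ * L := by ring

end auxlemmas

set_option maxHeartbeats 2000000 in
/-- Every minimizer `μ* = ρ*·m` of the free energy has `m`-essentially bounded density:
`ρ*(x) ≤ exp(12 γ (W_max − W_min) + 4)` for `m`-a.e. `x`. -/
theorem stmt1 {M : Type*} [MetricSpace M] [CompactSpace M] [MeasurableSpace M] [BorelSpace M]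
    (m : Measure M) [IsProbabilityMeasure m]
    (W : M → M → ℝ) (hWcont : Continuous fun p : M × M => W p.1 p.2)
    (hWsymm : ∀ x y, W x y = W y x) (γ : ℝ) (hγ : 0 < γ)
    (ρ : M → ℝ≥0∞) (hρmeas : Measurable ρ)
    (μ : Measure M) (hμ : μ = m.withDensity ρ) (hμprob : IsProbabilityMeasure μ)
    (hmin : ∀ ν : Measure M, IsProbabilityMeasure ν →
      freeEnergy m W γ μ ≤ freeEnergy m W γ ν) :
    ∀ᵐ x ∂m, ρ x ≤ ENNReal.ofReal (Real.exp (12 * γ *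
        (sSup (Set.range fun p : M × M => W p.1 p.2)
          - sInf (Set.range fun p : M × M => W p.1 p.2)) + 4)) := by
  -- basic setup
  set Wmax := sSup (Set.range fun p : M × M => W p.1 p.2) with hWmaxdef
  set Wmin := sInf (Set.range fun p : M × M => W p.1 p.2) with hWmindef
  have hneM : Nonempty M := by
    by_contra h
    have h0 : (Set.univ : Set M) = ∅ := Set.univ_eq_empty_iff.mpr (not_nonempty_iff.mp h)
    have hu := measure_univ (μ := m)
    rw [h0, measure_empty] at hu
    exact zero_ne_one hu
  have hWm : StronglyMeasurable fun p : M × M => W p.1 p.2 := hWcont.stronglyMeasurable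
  have hrange : (Set.range fun p : M × M => W p.1 p.2).Nonempty := Set.range_nonempty _
  have hcpt : IsCompact (Set.range fun p : M × M => W p.1 p.2) := isCompact_range hWcont
  have hWle : ∀ x y, W x y ≤ Wmax := fun x y => le_csSup hcpt.bddAbove ⟨(x, y), rfl⟩
  have hWge : ∀ x y, Wmin ≤ W x y := fun x y => csInf_le hcpt.bddBelow ⟨(x, y), rfl⟩
  have hΔ0 : 0 ≤ Wmax - Wmin := by
    obtain ⟨x⟩ := hneM
    have := hWle x x; have := hWge x x; linarith
  have hγΔ0 : 0 ≤ γ * (Wmax - Wmin) := mul_nonneg hγ.le hΔ0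
  set c := 12 * γ * (Wmax - Wmin) + 4 with hcdef
  set K := Real.exp c with hKdef
  have hc4 : 4 ≤ c := by nlinarith
  have hK0 : 0 < K := Real.exp_pos c
  have hK1 : 1 ≤ K := Real.one_le_exp (by linarith)
  have hlogK : Real.log K = c := Real.log_exp c
  clear_value c K
  -- density facts
  have hlint : ∫⁻ x, ρ x ∂m = 1 := by
    have hu := measure_univ (μ := μ)
    rw [hμ, withDensity_apply _ MeasurableSet.univ, Measure.restrict_univ] at hu
    exact hu
  have hρfin : ∀ᵐ x ∂m, ρ x < ⊤ := ae_lt_top hρmeas (by rw [hlint]; exact ENNReal.one_ne_top)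
  set r := fun x => (ρ x).toReal with hrdef
  have hrmeas : Measurable r := hρmeas.ennreal_toReal
  have hr0 : ∀ x, 0 ≤ r x := fun x => ENNReal.toReal_nonneg
  have hr_int : Integrable r m :=
    integrable_toReal_of_lintegral_ne_top hρmeas.aemeasurable (by rw [hlint]; exact ENNReal.one_ne_top)
  have hrint1 : ∫ x, r x ∂m = 1 := by
    rw [hrdef]
    rw [integral_toReal hρmeas.aemeasurable hρfin, hlint]
    simp
  have hμwd : μ = m.withDensity fun x => ENNReal.ofReal (r x) := by
    rw [hμ]
    exact withDensity_congr_ae (hρfin.mono fun x hx => (ENNReal.ofReal_toReal hx.ne).symm)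
  -- entropy of m is zero
  have hent_m : entropy m m = ((0 : ℝ) : EReal) := by
    have h1 : m.rnDeriv m =ᵐ[m] fun _ => 1 := Measure.rnDeriv_self m
    have h2 : (fun x => ((m.rnDeriv m x).toReal) * Real.log ((m.rnDeriv m x).toReal))
        =ᵐ[m] fun _ => (0 : ℝ) := h1.mono fun x hx => by simp [hx]
    rw [entropy, if_pos ⟨Measure.AbsolutelyContinuous.rfl, (integrable_const (0 : ℝ)).congr h2.symm⟩]
    rw [integral_congr_ae h2, integral_zero]
  have hFm : freeEnergy m W γ m = ((interactionEnergy W m : ℝ) : EReal) := by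
    rw [freeEnergy, hent_m, ← EReal.coe_mul, mul_zero, EReal.coe_zero, zero_add]
  -- finiteness of entropy of μ
  have hcond : μ ≪ m ∧
      Integrable (fun x => ((μ.rnDeriv m x).toReal) * Real.log ((μ.rnDeriv m x).toReal)) m := by
    by_contra hcon
    have htop : entropy m μ = ⊤ := by rw [entropy, if_neg hcon]
    have hFμ : freeEnergy m W γ μ = ⊤ := by
      rw [freeEnergy, htop, EReal.mul_top_of_pos (EReal.coe_pos.mpr (inv_pos.mpr hγ)),
        EReal.top_add_coe]
    have h := hmin m inferInstance
    rw [hFμ, hFm] at h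
    exact (EReal.coe_lt_top _).not_ge h
  have hrn : μ.rnDeriv m =ᵐ[m] ρ := hμ ▸ Measure.rnDeriv_withDensity m hρmeas
  have hφcong : (fun x => ((μ.rnDeriv m x).toReal) * Real.log ((μ.rnDeriv m x).toReal))
      =ᵐ[m] fun x => r x * Real.log (r x) := hrn.mono fun x hx => by rw [hrdef]; simp [hx]
  have hφr_int : Integrable (fun x => r x * Real.log (r x)) m := hcond.2.congr hφcong
  set E := ∫ x, r x * Real.log (r x) ∂m with hEdef
  have hentμ : entropy m μ = (E : EReal) := by
    rw [entropy, if_pos hcond, integral_congr_ae hφcong]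
  -- interaction bounds for μ and m
  have hbd_μ := aux_iter_bounds μ W hWm Wmin Wmax hWge hWle
  have hbd_m := aux_iter_bounds m W hWm Wmin Wmax hWge hWle
  -- entropy bound from minimality against m
  have hEle : E ≤ γ * (Wmax - Wmin) / 2 := by
    have h := hmin m inferInstance
    rw [hFm, freeEnergy, hentμ, ← EReal.coe_mul, ← EReal.coe_add] at h
    have h' := EReal.coe_le_coe_iff.mp h
    rw [interactionEnergy, interactionEnergy] at h'
    have h1 := hbd_μ.1
    have h2 := hbd_m.2
    have hγinv : 0 < γ⁻¹ := inv_pos.mpr hγ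
    have hcancel : γ * γ⁻¹ = 1 := mul_inv_cancel₀ hγ.ne'
    nlinarith [mul_le_mul_of_nonneg_left h' hγ.le]
  clear_value E
  -- truncation setup
  set p := fun x => r x - min (r x) K with hpdef
  have hp0 : ∀ x, 0 ≤ p x := fun x => sub_nonneg.mpr (min_le_left _ _)
  have hmin_meas : Measurable fun x => min (r x) K := hrmeas.min measurable_const
  have hmin0 : ∀ x, 0 ≤ min (r x) K := fun x => le_min (hr0 x) hK0.le
  have hmin_int : Integrable (fun x => min (r x) K) m := by
    refine Integrable.mono' hr_int hmin_meas.aestronglyMeasurable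
      (Filter.Eventually.of_forall fun x => ?_)
    rw [Real.norm_eq_abs, abs_of_nonneg (hmin0 x)]
    exact min_le_left _ _
  have hp_int : Integrable p m := hr_int.sub hmin_int
  set s := ∫ x, p x ∂m with hsdef
  have hs0 : 0 ≤ s := integral_nonneg hp0
  rcases eq_or_lt_of_le hs0 with hs | hs
  · -- s = 0 : done
    have hpz : p =ᵐ[m] 0 := (integral_eq_zero_iff_of_nonneg hp0 hp_int).mp hs.symm
    filter_upwards [hpz, hρfin] with x hx hfin
    have hrK : r x ≤ K := by
      have hx' : r x - min (r x) K = 0 := hx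
      have := min_le_right (r x) K
      linarith [sub_eq_zero.mp hx' ▸ this]
    calc ρ x = ENNReal.ofReal (r x) := (ENNReal.ofReal_toReal hfin.ne).symm
      _ ≤ ENNReal.ofReal K := ENNReal.ofReal_le_ofReal hrK
  · exfalso
    -- s > 0 : build a strictly better competitor, contradiction
    set T := ∫ x, min (r x) K * Real.log (min (r x) K) ∂m with hTdef
    have hTint : Integrable (fun x => min (r x) K * Real.log (min (r x) K)) m := by
      refine Integrable.mono' (integrable_const (1 + K * Real.log K))
        ((hmin_meas.mul (Real.measurable_log.comp hmin_meas)).aestronglyMeasurable)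
        (Filter.Eventually.of_forall fun x => ?_)
      rw [Real.norm_eq_abs]
      exact aux_abs_mul_log_le (hmin0 x) (min_le_right _ _) hK1
    have hG : c * s ≤ E - T := by
      have h1 : ∀ x, c * p x ≤ r x * Real.log (r x) - min (r x) K * Real.log (min (r x) K) := by
        intro x
        have := aux_gain (t := r x) hK0 (hr0 x)
        rw [hlogK] at this
        exact this
      have hsubint : Integrable
          (fun x => r x * Real.log (r x) - min (r x) K * Real.log (min (r x) K)) m :=
        hφr_int.sub hTint
      have h2 := integral_mono (hp_int.const_mul c) hsubint h1
      rw [integral_const_mul, integral_sub hφr_int hTint] at h2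
      rwa [← hsdef, ← hEdef, ← hTdef] at h2
    have hT_lb : -1 ≤ T := by
      have h := integral_mono (integrable_const (-1 : ℝ)) hTint
        (fun x => aux_neg_one_le_mul_log (hmin0 x))
      rw [← hTdef] at h
      simpa using h
    have hsc : c * s ≤ E + 1 := by linarith
    have hs14 : s ≤ 1 / 4 := by nlinarith
    set Z := ∫ x, min (r x) K ∂m with hZdef
    have hZs : Z = 1 - s := by
      have h : s = 1 - Z := by
        rw [hsdef]
        simp only [hpdef]
        rw [integral_sub hr_int hmin_int, hrint1, hZdef]
      linarith
    clear_value s Z T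
    have hZ34 : 3 / 4 ≤ Z := by rw [hZs]; linarith
    have hZpos : 0 < Z := by linarith
    have hZle1 : Z ≤ 1 := by rw [hZs]; linarith
    have hZinv1 : 1 ≤ Z⁻¹ := one_le_inv₀ hZpos |>.mpr hZle1
    have hZinv43 : Z⁻¹ ≤ 4 / 3 := by
      have := inv_anti₀ (by norm_num : (0 : ℝ) < 3 / 4) hZ34
      calc Z⁻¹ ≤ (3 / 4 : ℝ)⁻¹ := this
        _ = 4 / 3 := by norm_num
    set g := fun x => min (r x) K / Z with hgdef
    have hg_meas : Measurable g := hmin_meas.div_const Z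
    have hg0 : ∀ x, 0 ≤ g x := fun x => div_nonneg (hmin0 x) hZpos.le
    have hg_int : Integrable g m := hmin_int.div_const Z
    have hg1 : ∫ x, g x ∂m = 1 := by
      rw [hgdef]
      rw [integral_div, ← hZdef]
      exact div_self hZpos.ne'
    set ν := m.withDensity fun x => ENNReal.ofReal (g x) with hνdef
    have hνprob : IsProbabilityMeasure ν := by
      constructor
      rw [hνdef, withDensity_apply _ MeasurableSet.univ, Measure.restrict_univ,
        ← ofReal_integral_eq_lintegral_ofReal hg_int (Filter.Eventually.of_forall hg0), hg1,
        ENNReal.ofReal_one]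
    -- entropy of ν
    have hrnν : ν.rnDeriv m =ᵐ[m] fun x => ENNReal.ofReal (g x) :=
      Measure.rnDeriv_withDensity m hg_meas.ennreal_ofReal
    have hφgcong : (fun x => ((ν.rnDeriv m x).toReal) * Real.log ((ν.rnDeriv m x).toReal))
        =ᵐ[m] fun x => g x * Real.log (g x) :=
      hrnν.mono fun x hx => by
        show ((ν.rnDeriv m x).toReal) * Real.log ((ν.rnDeriv m x).toReal) = g x * Real.log (g x)
        rw [hx, ENNReal.toReal_ofReal (hg0 x)]
    have hKZ1 : 1 ≤ K / Z := by
      rw [le_div_iff₀ hZpos]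
      linarith
    have hgK : ∀ x, g x ≤ K / Z := fun x =>
      div_le_div_of_nonneg_right (min_le_right _ _) hZpos.le
    have hφg_int : Integrable (fun x => g x * Real.log (g x)) m := by
      refine Integrable.mono' (integrable_const (1 + K / Z * Real.log (K / Z)))
        ((hg_meas.mul (Real.measurable_log.comp hg_meas)).aestronglyMeasurable)
        (Filter.Eventually.of_forall fun x => ?_)
      rw [Real.norm_eq_abs]
      exact aux_abs_mul_log_le (hg0 x) (hgK x) hKZ1
    have hcondν : ν ≪ m ∧
        Integrable (fun x => ((ν.rnDeriv m x).toReal) * Real.log ((ν.rnDeriv m x).toReal)) m :=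
      ⟨hνdef ▸ withDensity_absolutelyContinuous m _, hφg_int.congr hφgcong.symm⟩
    set Eν := ∫ x, g x * Real.log (g x) ∂m with hEνdef
    have hentν : entropy m ν = (Eν : EReal) := by
      rw [entropy, if_pos hcondν, integral_congr_ae hφgcong]
    -- value of Eν
    have hEν_val : Eν = Z⁻¹ * T - Real.log Z := by
      have hpt : ∀ x, g x * Real.log (g x)
          = Z⁻¹ * (min (r x) K * Real.log (min (r x) K)) - Real.log Z / Z * min (r x) K := by
        intro x
        rcases eq_or_lt_of_le (hmin0 x) with h0 | h0
        · rw [hgdef]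
          simp [← h0]
        · rw [hgdef]
          have : Real.log (min (r x) K / Z) = Real.log (min (r x) K) - Real.log Z :=
            Real.log_div h0.ne' hZpos.ne'
          rw [this]
          field_simp
      rw [hEνdef]
      calc ∫ x, g x * Real.log (g x) ∂m
          = ∫ x, (Z⁻¹ * (min (r x) K * Real.log (min (r x) K)) - Real.log Z / Z * min (r x) K) ∂m := by
            exact integral_congr_ae (Filter.Eventually.of_forall hpt)
        _ = Z⁻¹ * T - Real.log Z / Z * Z := by
            rw [integral_sub (hTint.const_mul _) (hmin_int.const_mul _),
              integral_const_mul, integral_const_mul, hTdef, hZdef]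
        _ = Z⁻¹ * T - Real.log Z := by
            rw [div_mul_cancel₀ _ hZpos.ne']
    clear_value Eν
    -- entropy difference bound
    have hcs0 : 0 ≤ c * s := mul_nonneg (by linarith) hs0
    have hinvZ : Z⁻¹ * Z = 1 := inv_mul_cancel₀ hZpos.ne'
    have h1mZ : (1 : ℝ) - Z = s := by rw [hZs]; ring
    have hid : Z⁻¹ - 1 = Z⁻¹ * s := by
      calc Z⁻¹ - 1 = Z⁻¹ * 1 - Z⁻¹ * Z := by rw [mul_one, hinvZ]
        _ = Z⁻¹ * (1 - Z) := by ring
        _ = Z⁻¹ * s := by rw [h1mZ]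
    have hZinvs : Z⁻¹ * s ≤ 4 / 3 * s := mul_le_mul_of_nonneg_right hZinv43 hs0
    have hlogZ : -Real.log Z ≤ 4 / 3 * s := by
      have h1 := aux_one_sub_inv_le_log hZpos
      linarith
    have hEνE : Eν - E ≤ 2 / 3 * s * (γ * (Wmax - Wmin)) - c * s + 4 / 3 * s := by
      have hA2 : Z⁻¹ * T ≤ Z⁻¹ * E - Z⁻¹ * (c * s) := by
        calc Z⁻¹ * T ≤ Z⁻¹ * (E - c * s) :=
              mul_le_mul_of_nonneg_left (by linarith) (by linarith)
          _ = Z⁻¹ * E - Z⁻¹ * (c * s) := by ring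
      have hD : c * s ≤ Z⁻¹ * (c * s) := le_mul_of_one_le_left hcs0 hZinv1
      have hring : Z⁻¹ * E - E = (Z⁻¹ - 1) * E := by ring
      have hCa : (Z⁻¹ - 1) * E ≤ (Z⁻¹ - 1) * (γ * (Wmax - Wmin) / 2) :=
        mul_le_mul_of_nonneg_left hEle (by linarith)
      have hC4 : Z⁻¹ - 1 ≤ 4 / 3 * s := by rw [hid]; exact hZinvs
      have hCb : (Z⁻¹ - 1) * (γ * (Wmax - Wmin) / 2) ≤ 4 / 3 * s * (γ * (Wmax - Wmin) / 2) :=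
        mul_le_mul_of_nonneg_right hC4 (by linarith)
      have heq : 4 / 3 * s * (γ * (Wmax - Wmin) / 2) = 2 / 3 * s * (γ * (Wmax - Wmin)) := by
        ring
      rw [hEν_val]
      linarith
    -- interaction difference bound
    have hIν_eq : interactionEnergy W ν = 1 / 2 * ∫ x, g x * ∫ y, g y * W x y ∂m ∂m := by
      rw [interactionEnergy, hνdef, aux_wd_iter m W g hg_meas hg0]
    have hIμ_eq : interactionEnergy W μ = 1 / 2 * ∫ x, r x * ∫ y, r y * W x y ∂m ∂m := by
      rw [interactionEnergy, hμwd, aux_wd_iter m W r hrmeas hr0]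
    have hL : ∫ x, |g x - r x| ∂m ≤ 2 * s := by
      have hptw : ∀ x, |g x - r x| ≤ (g x - min (r x) K) + p x := by
        intro x
        have h1 : 0 ≤ g x - min (r x) K := by
          simp only [hgdef]
          have : min (r x) K * 1 ≤ min (r x) K * Z⁻¹ :=
            mul_le_mul_of_nonneg_left hZinv1 (hmin0 x)
          rw [div_eq_mul_inv]
          linarith
        have h2 : g x - r x = (g x - min (r x) K) - p x := by simp only [hpdef]; ring
        rw [h2]
        refine (abs_sub _ _).trans ?_
        rw [abs_of_nonneg h1, abs_of_nonneg (hp0 x)]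
      have hint1 : Integrable (fun x => (g x - min (r x) K) + p x) m :=
        (hg_int.sub hmin_int).add hp_int
      have habs : Integrable (fun x => |g x - r x|) m := by
        have h := (hg_int.sub hr_int)
        exact (h.congr (Filter.Eventually.of_forall fun x => by
          simp only [Pi.sub_apply])).abs
      have h := integral_mono habs hint1 hptw
      have hsubgm : Integrable (fun x => g x - min (r x) K) m := by
        have h2 := (hg_int.sub hmin_int)
        exact h2.congr (Filter.Eventually.of_forall fun x => by simp only [Pi.sub_apply])
      rw [integral_add hsubgm hp_int, integral_sub hg_int hmin_int, hg1,
        ← hZdef, ← hsdef] at h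
      calc ∫ x, |g x - r x| ∂m ≤ 1 - Z + s := h
        _ = 2 * s := by rw [hZs]; ring
    have hDdiff := aux_D_diff m W hWm Wmin Wmax hWge hWle g r hg_meas hrmeas hg0 hr0
      hg_int hr_int hg1 hrint1
    have hIdiff : interactionEnergy W ν - interactionEnergy W μ ≤ 2 * (Wmax - Wmin) * s := by
      rw [hIν_eq, hIμ_eq]
      have h1 : |(∫ x, g x * ∫ y, g y * W x y ∂m ∂m) - ∫ x, r x * ∫ y, r y * W x y ∂m ∂m|
          ≤ 2 * (Wmax - Wmin) * (2 * s) := by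
        refine hDdiff.trans ?_
        have : 0 ≤ 2 * (Wmax - Wmin) := by linarith
        exact mul_le_mul_of_nonneg_left hL this
      have h2 := (abs_le.mp h1).2
      linarith
    -- final contradiction
    have hmν := hmin ν hνprob
    rw [freeEnergy, freeEnergy, hentμ, hentν, ← EReal.coe_mul, ← EReal.coe_mul,
      ← EReal.coe_add, ← EReal.coe_add] at hmν
    set Iμ' := interactionEnergy W μ with hIμ'def
    set Iν' := interactionEnergy W ν with hIν'def
    clear_value Iμ' Iν'
    have hreal : γ⁻¹ * E + Iμ' ≤ γ⁻¹ * Eν + Iν' := EReal.coe_le_coe_iff.mp hmν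
    clear hmν
    have hγinv : 0 < γ⁻¹ := inv_pos.mpr hγ
    have hcancel : γ * γ⁻¹ = 1 := mul_inv_cancel₀ hγ.ne'
    have hEnt_mul := mul_le_mul_of_nonneg_left hEνE hγinv.le
    have hexp : γ⁻¹ * (2 / 3 * s * (γ * (Wmax - Wmin)) - c * s + 4 / 3 * s)
        = 2 / 3 * (s * (Wmax - Wmin)) - 12 * (s * (Wmax - Wmin)) - 4 * (γ⁻¹ * s)
          + 4 / 3 * (γ⁻¹ * s) := by
      rw [hcdef]
      field_simp
      ring
    have hkey : γ⁻¹ * Eν - γ⁻¹ * E ≤ 2 / 3 * (s * (Wmax - Wmin)) - 12 * (s * (Wmax - Wmin))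
        - 4 * (γ⁻¹ * s) + 4 / 3 * (γ⁻¹ * s) := by
      calc γ⁻¹ * Eν - γ⁻¹ * E = γ⁻¹ * (Eν - E) := by ring
        _ ≤ γ⁻¹ * (2 / 3 * s * (γ * (Wmax - Wmin)) - c * s + 4 / 3 * s) := hEnt_mul
        _ = _ := hexp
    have hIdiff' : Iν' - Iμ' ≤ 2 * (s * (Wmax - Wmin)) := by linarith only [hIdiff]
    have hprod1 : 0 ≤ s * (Wmax - Wmin) := mul_nonneg hs.le hΔ0
    have hprod2 : 0 < γ⁻¹ * s := mul_pos hγinv hs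
    linarith only [hreal, hkey, hIdiff', hprod1, hprod2]
end

section
/- Suppose m has full support and ρ : M → ℝ is a continuous, strictly positive probability density with respect to m such that ∫_M (γ⁻¹ log ρ + W*ρ)(ρ' − ρ) dm = 0 for every bounded measurable probability density ρ' with respect to m. Then γ⁻¹ log ρ + W*ρ is constant on M, and consequently ρ is a Gibbs fixed point at parameter γ, i.e. ρ = Z(γ,ρ)⁻¹ exp(−γ W*ρ). -/
open MeasureTheory

/-- The convolution `(W*ρ)(x) = ∫ W(x,y) ρ(y) dm(y)`. -/
noncomputable def conv {M : Type*} [MeasurableSpace M] (m : Measure M)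
    (W : M → M → ℝ) (ρ : M → ℝ) (x : M) : ℝ :=
  ∫ y, W x y * ρ y ∂m

/-- The normalization constant `Z(γ,ρ) = ∫ exp(−γ (W*ρ)) dm`. -/
noncomputable def Zconst {M : Type*} [MeasurableSpace M] (m : Measure M)
    (W : M → M → ℝ) (γ : ℝ) (ρ : M → ℝ) : ℝ :=
  ∫ x, Real.exp (-γ * conv m W ρ x) ∂m

/-- `ρ` is a Gibbs fixed point at parameter `γ`:
`ρ = Z(γ,ρ)⁻¹ exp(−γ W*ρ)` `m`-almost everywhere. -/
def IsGibbsFixedPoint {M : Type*} [MeasurableSpace M] (m : Measure M)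
    (W : M → M → ℝ) (γ : ℝ) (ρ : M → ℝ) : Prop :=
  ∀ᵐ x ∂m, ρ x = (Zconst m W γ ρ)⁻¹ * Real.exp (-γ * conv m W ρ x)

/-- If `m` has full support and `ρ` is a continuous strictly positive probability density whose
first variation of the free energy vanishes against all bounded measurable probability densities,
then `γ⁻¹ log ρ + W*ρ` is constant and `ρ` is a Gibbs fixed point. -/
theorem stmt3 {M : Type*} [MetricSpace M] [CompactSpace M] [MeasurableSpace M] [BorelSpace M]
    (m : Measure M) [IsProbabilityMeasure m] [m.IsOpenPosMeasure]
    (W : M → M → ℝ) (hWcont : Continuous fun p : M × M => W p.1 p.2)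
    (hWsymm : ∀ x y, W x y = W y x) (γ : ℝ) (hγ : 0 < γ)
    (ρ : M → ℝ) (hρcont : Continuous ρ) (hρpos : ∀ x, 0 < ρ x)
    (hρone : ∫ x, ρ x ∂m = 1)
    (hcrit : ∀ ρ' : M → ℝ, Measurable ρ' → (∃ C : ℝ, ∀ x, |ρ' x| ≤ C) →
        (∀ x, 0 ≤ ρ' x) → (∫ x, ρ' x ∂m = 1) →
        ∫ x, (γ⁻¹ * Real.log (ρ x) + conv m W ρ x) * (ρ' x - ρ x) ∂m = 0) :
    (∀ x y : M, γ⁻¹ * Real.log (ρ x) + conv m W ρ x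
        = γ⁻¹ * Real.log (ρ y) + conv m W ρ y) ∧
    (∀ x, ρ x = (Zconst m W γ ρ)⁻¹ * Real.exp (-γ * conv m W ρ x)) := by
  have hint : ∀ f : M → ℝ, Continuous f → Integrable f m := fun f hf => by
    have := (hf.continuousOn).integrableOn_compact (μ := m) (isCompact_univ (X := M))
    simpa [integrableOn_univ] using this
  have hρint : Integrable ρ m := hint ρ hρcont
  obtain ⟨CW, hCW⟩ := isCompact_univ.exists_bound_of_continuousOn hWcont.continuousOn
  -- continuity of conv
  have hconvcont : Continuous (conv m W ρ) := by
    apply continuous_of_dominated (bound := fun y => CW * ρ y)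
    · intro x
      exact ((hWcont.comp (Continuous.prodMk_right x)).mul hρcont).aestronglyMeasurable
    · intro x
      filter_upwards with y
      rw [Real.norm_eq_abs, abs_mul, abs_of_pos (hρpos y)]
      exact mul_le_mul_of_nonneg_right (by simpa using hCW (x, y) trivial) (hρpos y).le
    · exact hρint.const_mul CW
    · filter_upwards with y
      exact (hWcont.comp (continuous_id.prodMk continuous_const)).mul continuous_const
  set F : M → ℝ := fun x => γ⁻¹ * Real.log (ρ x) + conv m W ρ x with hF
  have hFcont : Continuous F :=
    (continuous_const.mul (hρcont.log fun x => (hρpos x).ne')).add hconvcont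
  have hFint : Integrable F m := hint F hFcont
  have hFρint : Integrable (fun x => F x * ρ x) m := hint _ (hFcont.mul hρcont)
  obtain ⟨CF, hCF⟩ := isCompact_univ.exists_bound_of_continuousOn hFcont.continuousOn
  set c : ℝ := ∫ x, F x * ρ x ∂m with hc
  -- key: integral of F over any measurable set of positive measure
  have hkey : ∀ s : Set M, MeasurableSet s → m s ≠ 0 →
      ∫ x in s, F x ∂m = (m s).toReal * c := by
    intro s hs hs0
    have hfin : m s ≠ ⊤ := measure_ne_top m s
    have ht : (0:ℝ) < (m s).toReal := ENNReal.toReal_pos hs0 hfin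
    set ρ' : M → ℝ := fun x => (m s).toReal⁻¹ * s.indicator 1 x with hρ'
    have hmeas : Measurable ρ' := (measurable_one.indicator hs).const_mul _
    have hbdd : ∃ C : ℝ, ∀ x, |ρ' x| ≤ C := by
      refine ⟨(m s).toReal⁻¹, fun x => ?_⟩
      rw [hρ']
      simp only [abs_mul, abs_of_pos (inv_pos.mpr ht)]
      have : |s.indicator (1 : M → ℝ) x| ≤ 1 := by
        by_cases hx : x ∈ s <;> simp [Set.indicator_apply, hx]
      nlinarith [inv_pos.mpr ht]
    have hnn : ∀ x, 0 ≤ ρ' x := by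
      intro x
      apply mul_nonneg (inv_pos.mpr ht).le
      by_cases hx : x ∈ s <;> simp [Set.indicator_apply, hx]
    have hone : ∫ x, ρ' x ∂m = 1 := by
      rw [hρ', integral_const_mul, integral_indicator_one hs, measureReal_def]
      field_simp
    have h0 := hcrit ρ' hmeas hbdd hnn hone
    have hρ'int : Integrable (fun x => F x * ρ' x) m := by
      refine ⟨(hFcont.measurable.mul hmeas).aestronglyMeasurable, ?_⟩
      apply HasFiniteIntegral.of_bounded (C := CF * (m s).toReal⁻¹)
      filter_upwards with x
      rw [Real.norm_eq_abs, abs_mul]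
      have h1 : |F x| ≤ CF := by simpa using hCF x trivial
      have h2 : |ρ' x| ≤ (m s).toReal⁻¹ := by
        rw [abs_of_nonneg (hnn x)]
        calc ρ' x ≤ (m s).toReal⁻¹ * 1 := by
              apply mul_le_mul_of_nonneg_left _ (inv_pos.mpr ht).le
              by_cases hx : x ∈ s <;> simp [Set.indicator_apply, hx]
          _ = (m s).toReal⁻¹ := mul_one _
      exact mul_le_mul h1 h2 (abs_nonneg _) ((abs_nonneg (F x)).trans h1)
    have hsplit : ∫ x, F x * (ρ' x - ρ x) ∂m
        = (∫ x, F x * ρ' x ∂m) - ∫ x, F x * ρ x ∂m := by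
      simp_rw [mul_sub]
      exact integral_sub hρ'int hFρint
    rw [hsplit] at h0
    have h1 : ∫ x, F x * ρ' x ∂m = c := by linarith
    have h2 : ∫ x, F x * ρ' x ∂m = (m s).toReal⁻¹ * ∫ x in s, F x ∂m := by
      have : ∀ x, F x * ρ' x = (m s).toReal⁻¹ * s.indicator F x := by
        intro x
        rw [hρ']
        by_cases hx : x ∈ s <;> simp [Set.indicator_apply, hx] <;> ring
      simp_rw [this]
      rw [integral_const_mul, integral_indicator hs]
    rw [h2] at h1
    field_simp at h1
    linarith
  -- F is constant = c
  have hFc : ∀ x, F x = c := by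
    intro x0
    by_contra hne
    rcases lt_or_gt_of_ne hne with h | h
    · -- F x0 < c
      set ε := (c - F x0) / 2 with hε
      have hεpos : 0 < ε := by simp [hε]; linarith
      set U := F ⁻¹' Set.Iio (c - ε) with hU
      have hUopen : IsOpen U := isOpen_Iio.preimage hFcont
      have hx0U : x0 ∈ U := by simp [hU, hε]; linarith
      have hUpos : 0 < m U := hUopen.measure_pos m ⟨x0, hx0U⟩
      have ht : (0:ℝ) < (m U).toReal := ENNReal.toReal_pos hUpos.ne' (measure_ne_top m U)
      have hbound : ∫ x in U, F x ∂m ≤ (c - ε) * (m U).toReal := by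
        calc ∫ x in U, F x ∂m ≤ ∫ _ in U, (c - ε) ∂m := by
              apply setIntegral_mono_on (hFint.integrableOn) ((integrableOn_const_iff (C := c - ε)).mpr _)
                hUopen.measurableSet (fun x hx => le_of_lt (by simpa [hU] using hx))
              right; exact measure_lt_top m U
          _ = (c - ε) * (m U).toReal := by simp [mul_comm, measureReal_def]
      rw [hkey U hUopen.measurableSet hUpos.ne'] at hbound
      nlinarith
    · set ε := (F x0 - c) / 2 with hε
      have hεpos : 0 < ε := by simp [hε]; linarith
      set U := F ⁻¹' Set.Ioi (c + ε) with hU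
      have hUopen : IsOpen U := isOpen_Ioi.preimage hFcont
      have hx0U : x0 ∈ U := by simp [hU, hε]; linarith
      have hUpos : 0 < m U := hUopen.measure_pos m ⟨x0, hx0U⟩
      have ht : (0:ℝ) < (m U).toReal := ENNReal.toReal_pos hUpos.ne' (measure_ne_top m U)
      have hbound : (c + ε) * (m U).toReal ≤ ∫ x in U, F x ∂m := by
        calc (c + ε) * (m U).toReal = ∫ _ in U, (c + ε) ∂m := by simp [mul_comm, measureReal_def]
          _ ≤ ∫ x in U, F x ∂m := by
              apply setIntegral_mono_on ((integrableOn_const_iff (C := c + ε)).mpr _) (hFint.integrableOn)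
                hUopen.measurableSet (fun x hx => le_of_lt (by simpa [hU] using hx))
              right; exact measure_lt_top m U
      rw [hkey U hUopen.measurableSet hUpos.ne'] at hbound
      nlinarith
  constructor
  · intro x y; rw [show γ⁻¹ * Real.log (ρ x) + conv m W ρ x = F x from rfl, hFc x, ← hFc y]
  · -- Gibbs fixed point
    have hρeq : ∀ x, ρ x = Real.exp (γ * c) * Real.exp (-γ * conv m W ρ x) := by
      intro x
      have h1 : γ⁻¹ * Real.log (ρ x) + conv m W ρ x = c := hFc x
      have h2 : Real.log (ρ x) = γ * c - γ * conv m W ρ x := by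
        field_simp at h1 ⊢
        nlinarith [h1]
      have := Real.exp_log (hρpos x)
      rw [← this, h2, ← Real.exp_add]
      ring_nf
    have hZ : Zconst m W γ ρ = Real.exp (-(γ * c)) := by
      have : ∀ x, Real.exp (-γ * conv m W ρ x) = Real.exp (-(γ * c)) * ρ x := by
        intro x
        rw [hρeq x, ← mul_assoc, ← Real.exp_add]
        simp
      rw [Zconst]
      simp_rw [this]
      rw [integral_const_mul, hρone, mul_one]
    intro x
    rw [hZ, Real.exp_neg, inv_inv, hρeq x]
end

section
/- Let (ρ_γ)_{γ>0} be any family such that ρ_γ is a Gibbs fixed point at parameter γ for each γ. Then ρ_γ converges to the uniform density ρ̄ ≡ 1 as γ → 0⁺, both m-essentially uniformly and in L²(m): ‖ρ_γ − 1‖_{L∞(m)} ≤ max(1 − exp(−2γ‖W‖_∞), exp(2γ‖W‖_∞) − 1) → 0 and ‖ρ_γ − 1‖_{L²(m)} → 0 as γ → 0⁺. -/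
open MeasureTheory

/-- Any family of Gibbs fixed points `ρ_γ` converges to the uniform density `1` as `γ → 0⁺`,
both `m`-essentially uniformly (with the explicit bound) and in `L²(m)`. -/
theorem stmt5 {M : Type*} [MetricSpace M] [CompactSpace M] [MeasurableSpace M] [BorelSpace M]
    (m : Measure M) [IsProbabilityMeasure m]
    (W : M → M → ℝ) (hWcont : Continuous fun p : M × M => W p.1 p.2)
    (hWsymm : ∀ x y, W x y = W y x)
    (ρ : ℝ → M → ℝ)
    (hmeas : ∀ γ : ℝ, 0 < γ → Measurable (ρ γ))
    (hint : ∀ γ : ℝ, 0 < γ → Integrable (ρ γ) m)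
    (hpos : ∀ γ : ℝ, 0 < γ → 0 ≤ᵐ[m] ρ γ)
    (hone : ∀ γ : ℝ, 0 < γ → (∫ x, ρ γ x ∂m) = 1)
    (hGibbs : ∀ γ : ℝ, 0 < γ → IsGibbsFixedPoint m W γ (ρ γ)) :
    (∀ γ : ℝ, 0 < γ → ∀ᵐ x ∂m,
        |ρ γ x - 1| ≤ max (1 - Real.exp (-2 * γ * sSup (Set.range fun p : M × M => |W p.1 p.2|)))
          (Real.exp (2 * γ * sSup (Set.range fun p : M × M => |W p.1 p.2|)) - 1)) ∧
    Filter.Tendsto (fun γ : ℝ => eLpNorm (fun x => ρ γ x - 1) ⊤ m)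
      (nhdsWithin 0 (Set.Ioi 0)) (nhds 0) ∧
    Filter.Tendsto (fun γ : ℝ => eLpNorm (fun x => ρ γ x - 1) 2 m)
      (nhdsWithin 0 (Set.Ioi 0)) (nhds 0) := by
  classical
  haveI : Nonempty M := by
    by_contra h
    rw [not_nonempty_iff] at h
    have h1 : m Set.univ = 1 := measure_univ
    rw [Set.univ_eq_empty_iff.mpr h] at h1
    simp at h1
  set K := sSup (Set.range fun p : M × M => |W p.1 p.2|) with hKdef
  have hbdd : BddAbove (Set.range fun p : M × M => |W p.1 p.2|) :=
    (isCompact_range hWcont.abs).bddAbove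
  have hKle : ∀ x y : M, |W x y| ≤ K := fun x y => le_csSup hbdd ⟨(x, y), rfl⟩
  obtain ⟨x₀⟩ := ‹Nonempty M›
  have hK0 : (0 : ℝ) ≤ K := (abs_nonneg _).trans (hKle x₀ x₀)
  have main : ∀ γ : ℝ, 0 < γ → ∀ᵐ x ∂m,
      |ρ γ x - 1| ≤ max (1 - Real.exp (-2 * γ * K)) (Real.exp (2 * γ * K) - 1) := by
    intro γ hγ
    -- bound on the convolution
    have hconvb : ∀ x, |conv m W (ρ γ) x| ≤ K := by
      intro x
      have hi : Integrable (fun y => W x y * ρ γ y) m :=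
        Integrable.bdd_mul (c := K) (hint γ hγ)
          ((hWcont.comp (Continuous.prodMk_right x)).aestronglyMeasurable)
          (Filter.Eventually.of_forall fun y => by simpa only [Real.norm_eq_abs] using hKle x y)
      have h1 : |∫ y, W x y * ρ γ y ∂m| ≤ ∫ y, |W x y * ρ γ y| ∂m := by
        simpa only [Real.norm_eq_abs] using
          norm_integral_le_integral_norm (μ := m) (fun y => W x y * ρ γ y)
      have h2 : (∫ y, |W x y * ρ γ y| ∂m) ≤ ∫ y, K * ρ γ y ∂m := by
        refine integral_mono_ae hi.abs ((hint γ hγ).const_mul K) ?_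
        filter_upwards [hpos γ hγ] with y hy
        rw [abs_mul, abs_of_nonneg hy]
        exact mul_le_mul_of_nonneg_right (hKle x y) hy
      have h3 : (∫ y, K * ρ γ y ∂m) = K := by
        rw [integral_const_mul, hone γ hγ, mul_one]
      calc |conv m W (ρ γ) x| ≤ ∫ y, |W x y * ρ γ y| ∂m := h1
        _ ≤ ∫ y, K * ρ γ y ∂m := h2
        _ = K := h3
    have hconvlo : ∀ x, -K ≤ conv m W (ρ γ) x := fun x => (abs_le.mp (hconvb x)).1
    have hconvhi : ∀ x, conv m W (ρ γ) x ≤ K := fun x => (abs_le.mp (hconvb x)).2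
    -- pointwise bounds on the exponential
    have hexplo : ∀ x, Real.exp (-γ * K) ≤ Real.exp (-γ * conv m W (ρ γ) x) := by
      intro x
      apply Real.exp_le_exp.mpr
      nlinarith [hconvhi x]
    have hexphi : ∀ x, Real.exp (-γ * conv m W (ρ γ) x) ≤ Real.exp (γ * K) := by
      intro x
      apply Real.exp_le_exp.mpr
      nlinarith [hconvlo x]
    -- measurability of the convolution
    have hconvmeas : Measurable (conv m W (ρ γ)) := by
      have hsm : StronglyMeasurable (Function.uncurry fun x y => W x y * ρ γ y) :=
        (hWcont.measurable.mul ((hmeas γ hγ).comp measurable_snd)).stronglyMeasurable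
      exact hsm.integral_prod_right'.measurable
    have hZint : Integrable (fun x => Real.exp (-γ * conv m W (ρ γ) x)) m := by
      refine Integrable.mono' (integrable_const (Real.exp (γ * K)))
        ((Real.measurable_exp.comp ((hconvmeas.const_mul (-γ)))).aestronglyMeasurable) ?_
      filter_upwards with x
      rw [Real.norm_eq_abs, abs_of_nonneg (Real.exp_nonneg _)]
      exact hexphi x
    have hZlo : Real.exp (-γ * K) ≤ Zconst m W γ (ρ γ) := by
      have := integral_mono (integrable_const (Real.exp (-γ * K))) hZint hexplo
      simpa [Zconst, neg_mul] using this
    have hZhi : Zconst m W γ (ρ γ) ≤ Real.exp (γ * K) := by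
      have := integral_mono hZint (integrable_const (Real.exp (γ * K))) hexphi
      simpa [Zconst, neg_mul] using this
    have hZpos : 0 < Zconst m W γ (ρ γ) := lt_of_lt_of_le (Real.exp_pos _) hZlo
    filter_upwards [hGibbs γ hγ] with x hx
    have hinvlo : Real.exp (-(γ * K)) ≤ (Zconst m W γ (ρ γ))⁻¹ := by
      rw [Real.exp_neg]
      exact inv_anti₀ hZpos hZhi
    have hinvhi : (Zconst m W γ (ρ γ))⁻¹ ≤ Real.exp (γ * K) := by
      calc (Zconst m W γ (ρ γ))⁻¹ ≤ (Real.exp (-γ * K))⁻¹ :=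
            inv_anti₀ (Real.exp_pos _) hZlo
        _ = Real.exp (γ * K) := by rw [← Real.exp_neg]; ring_nf
    have hvlo : Real.exp (-2 * γ * K) ≤ ρ γ x := by
      rw [hx]
      have : Real.exp (-(γ * K)) * Real.exp (-γ * K) ≤
          (Zconst m W γ (ρ γ))⁻¹ * Real.exp (-γ * conv m W (ρ γ) x) :=
        mul_le_mul hinvlo (hexplo x) (Real.exp_nonneg _) (inv_nonneg.mpr hZpos.le)
      calc Real.exp (-2 * γ * K) = Real.exp (-(γ * K)) * Real.exp (-γ * K) := by
            rw [← Real.exp_add]; ring_nf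
        _ ≤ _ := this
    have hvhi : ρ γ x ≤ Real.exp (2 * γ * K) := by
      rw [hx]
      have : (Zconst m W γ (ρ γ))⁻¹ * Real.exp (-γ * conv m W (ρ γ) x) ≤
          Real.exp (γ * K) * Real.exp (γ * K) :=
        mul_le_mul hinvhi (hexphi x) (Real.exp_nonneg _) (Real.exp_nonneg _)
      calc (Zconst m W γ (ρ γ))⁻¹ * Real.exp (-γ * conv m W (ρ γ) x) ≤
            Real.exp (γ * K) * Real.exp (γ * K) := this
        _ = Real.exp (2 * γ * K) := by rw [← Real.exp_add]; ring_nf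
    rw [abs_le]
    constructor
    · have h := le_max_left (1 - Real.exp (-2 * γ * K)) (Real.exp (2 * γ * K) - 1)
      linarith
    · have h := le_max_right (1 - Real.exp (-2 * γ * K)) (Real.exp (2 * γ * K) - 1)
      linarith
  have hgen : ∀ p : ENNReal, Filter.Tendsto (fun γ : ℝ => eLpNorm (fun x => ρ γ x - 1) p m)
      (nhdsWithin 0 (Set.Ioi 0)) (nhds 0) := by
    intro p
    have hBcont : Filter.Tendsto
        (fun γ : ℝ => max (1 - Real.exp (-2 * γ * K)) (Real.exp (2 * γ * K) - 1))
        (nhdsWithin 0 (Set.Ioi 0)) (nhds 0) := by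
      have hc : Continuous
          (fun γ : ℝ => max (1 - Real.exp (-2 * γ * K)) (Real.exp (2 * γ * K) - 1)) := by
        fun_prop
      have := (hc.tendsto 0).mono_left (nhdsWithin_le_nhds (s := Set.Ioi (0:ℝ)))
      simpa using this
    have hBtend : Filter.Tendsto
        (fun γ : ℝ => ENNReal.ofReal
          (max (1 - Real.exp (-2 * γ * K)) (Real.exp (2 * γ * K) - 1)))
        (nhdsWithin 0 (Set.Ioi 0)) (nhds 0) := by
      have := (ENNReal.continuous_ofReal.tendsto 0).comp hBcont
      rwa [ENNReal.ofReal_zero] at this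
    refine tendsto_of_tendsto_of_tendsto_of_le_of_le' tendsto_const_nhds hBtend
      (Filter.Eventually.of_forall fun γ => zero_le) ?_
    filter_upwards [self_mem_nhdsWithin] with γ hγ
    have hb := eLpNorm_le_of_ae_bound (μ := m) (f := fun x => ρ γ x - 1) (p := p)
      (C := max (1 - Real.exp (-2 * γ * K)) (Real.exp (2 * γ * K) - 1))
      ((main γ hγ).mono fun x hx => by simpa only [Real.norm_eq_abs] using hx)
    simpa [measure_univ] using hb
  exact ⟨main, hgen ⊤, hgen 2⟩
end

section
/- Suppose there exists a bounded measurable probability density ρ with respect to m such that I(ρ·m) < I(m). Then for every γ > log(ess sup ρ) / (I(m) − I(ρ·m)) one has F_γ(ρ·m) < F_γ(m); in particular there exists γ̃ > 0 at which m is not a minimizer of the free energy F_γ̃. -/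
open MeasureTheory
open scoped Classical
open scoped ENNReal

lemma mul_log_abs_le {t C : ℝ} (ht0 : 0 ≤ t) (htC : t ≤ C) :
    |t * Real.log t| ≤ max 1 (C * Real.log C) := by
  rcases le_or_gt t 1 with h | h
  · rcases eq_or_lt_of_le ht0 with h0 | h0
    · simp [← h0]
    · have hlog : Real.log t ≤ 0 := Real.log_nonpos ht0 h
      have hinv := Real.log_le_sub_one_of_pos (x := t⁻¹) (by positivity)
      rw [Real.log_inv] at hinv
      have hn : t * Real.log t ≤ 0 := mul_nonpos_of_nonneg_of_nonpos ht0 hlog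
      rw [abs_of_nonpos hn]
      refine le_max_of_le_left ?_
      have h1 : -Real.log t ≤ t⁻¹ - 1 := by linarith
      have h2 := mul_le_mul_of_nonneg_left h1 ht0
      have ht : t * t⁻¹ = 1 := mul_inv_cancel₀ h0.ne'
      nlinarith
  · have hl : 0 ≤ Real.log t := Real.log_nonneg h.le
    rw [abs_of_nonneg (mul_nonneg ht0 hl)]
    exact le_max_of_le_right
      (mul_le_mul htC (Real.log_le_log (by linarith) htC) hl (by linarith))

/-- If some bounded measurable probability density `ρ` has `I(ρ·m) < I(m)`, then for every
`γ > log(ess sup ρ)/(I(m) − I(ρ·m))` we have `F_γ(ρ·m) < F_γ(m)`; in particular there is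
`γ̃ > 0` at which `m` is not a minimizer of the free energy. -/
theorem stmt12 {M : Type*} [MetricSpace M] [CompactSpace M] [MeasurableSpace M] [BorelSpace M]
    (m : Measure M) [IsProbabilityMeasure m]
    (W : M → M → ℝ) (hWcont : Continuous fun p : M × M => W p.1 p.2)
    (hWsymm : ∀ x y, W x y = W y x)
    (ρ : M → ℝ) (hρmeas : Measurable ρ) (hρpos : ∀ x, 0 ≤ ρ x)
    (hρbdd : ∃ C : ℝ, ∀ x, ρ x ≤ C) (hρone : ∫ x, ρ x ∂m = 1)
    (hI : interactionEnergy W (m.withDensity fun x => ENNReal.ofReal (ρ x))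
        < interactionEnergy W m) :
    (∀ γ : ℝ,
      Real.log (essSup ρ m) /
          (interactionEnergy W m
            - interactionEnergy W (m.withDensity fun x => ENNReal.ofReal (ρ x))) < γ →
      freeEnergy m W γ (m.withDensity fun x => ENNReal.ofReal (ρ x)) < freeEnergy m W γ m) ∧
    (∃ γ : ℝ, 0 < γ ∧ ¬ (∀ ν : Measure M, IsProbabilityMeasure ν →
        freeEnergy m W γ m ≤ freeEnergy m W γ ν)) := by
  obtain ⟨C₀, hC₀⟩ := hρbdd
  set C : ℝ := max C₀ 1 with hCdef
  have hρC : ∀ x, ρ x ≤ C := fun x => (hC₀ x).trans (le_max_left _ _)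
  set f : M → ℝ≥0∞ := fun x => ENNReal.ofReal (ρ x) with hfdef
  set μ : Measure M := m.withDensity f with hμdef
  -- integrability of ρ
  have hρint : Integrable ρ m := by
    refine (integrable_const C).mono' hρmeas.aestronglyMeasurable (ae_of_all _ fun x => ?_)
    rw [Real.norm_eq_abs, abs_of_nonneg (hρpos x)]; exact hρC x
  -- μ is a probability measure
  have hμprob : IsProbabilityMeasure μ := by
    constructor
    rw [hμdef, withDensity_apply _ MeasurableSet.univ, Measure.restrict_univ,
      ← ofReal_integral_eq_lintegral_ofReal hρint (ae_of_all _ hρpos), hρone]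
    simp
  -- Radon–Nikodym derivative of μ
  have hrn : μ.rnDeriv m =ᵐ[m] f :=
    Measure.rnDeriv_withDensity m hρmeas.ennreal_ofReal
  have hrneq : (fun x => ((μ.rnDeriv m x).toReal) * Real.log ((μ.rnDeriv m x).toReal))
      =ᵐ[m] fun x => ρ x * Real.log (ρ x) := by
    filter_upwards [hrn] with x hx
    rw [hx]; simp [hfdef, ENNReal.toReal_ofReal (hρpos x)]
  have hent_int : Integrable (fun x => ρ x * Real.log (ρ x)) m := by
    refine (integrable_const (max 1 (C * Real.log C))).mono'
      (hρmeas.aestronglyMeasurable.mul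
        (Real.measurable_log.comp hρmeas).aestronglyMeasurable)
      (ae_of_all _ fun x => ?_)
    rw [Real.norm_eq_abs]
    exact mul_log_abs_le (hρpos x) (hρC x)
  have hint2 : Integrable
      (fun x => ((μ.rnDeriv m x).toReal) * Real.log ((μ.rnDeriv m x).toReal)) m :=
    hent_int.congr hrneq.symm
  set Eμ : ℝ := ∫ x, ρ x * Real.log (ρ x) ∂m with hEdef
  have hentμ : entropy m μ = ((Eμ : ℝ) : EReal) := by
    rw [entropy, if_pos ⟨withDensity_absolutelyContinuous m f, hint2⟩]
    exact congrArg _ (integral_congr_ae hrneq)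
  have hentm : entropy m m = ((0 : ℝ) : EReal) := by
    have h0 : (fun x => ((m.rnDeriv m x).toReal) * Real.log ((m.rnDeriv m x).toReal))
        =ᵐ[m] fun _ => (0 : ℝ) := by
      filter_upwards [Measure.rnDeriv_self m] with x hx
      rw [hx]; simp
    rw [entropy, if_pos ⟨Measure.AbsolutelyContinuous.rfl, (integrable_const 0).congr h0.symm⟩]
    rw [integral_congr_ae h0, integral_const]; simp
  -- essSup bound
  set S : ℝ := essSup ρ m with hSdef
  have hbdd : Filter.IsBoundedUnder (· ≤ ·) (ae m) ρ :=
    ⟨C, Filter.eventually_map.mpr (ae_of_all _ hρC)⟩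
  have hS : ∀ᵐ x ∂m, ρ x ≤ S := ae_le_essSup hbdd
  have hS1 : (1 : ℝ) ≤ S := by
    have h1 : ∫ x, ρ x ∂m ≤ ∫ _x, S ∂m := integral_mono_ae hρint (integrable_const S) hS
    rwa [hρone, integral_const, probReal_univ, one_smul] at h1
  have hL0 : 0 ≤ Real.log S := Real.log_nonneg hS1
  have hElog : Eμ ≤ Real.log S := by
    have hpt : ∀ᵐ x ∂m, ρ x * Real.log (ρ x) ≤ ρ x * Real.log S := by
      filter_upwards [hS] with x hx
      rcases eq_or_lt_of_le (hρpos x) with h0 | h0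
      · simp [← h0]
      · exact mul_le_mul_of_nonneg_left (Real.log_le_log h0 hx) (hρpos x)
    calc Eμ ≤ ∫ x, ρ x * Real.log S ∂m :=
          integral_mono_ae hent_int (hρint.mul_const _) hpt
      _ = (∫ x, ρ x ∂m) * Real.log S := integral_mul_const _ _
      _ = Real.log S := by rw [hρone, one_mul]
  set Iμ : ℝ := interactionEnergy W μ with hIμdef
  set Im : ℝ := interactionEnergy W m with hImdef
  have hD : 0 < Im - Iμ := sub_pos.mpr hI
  have key : ∀ γ : ℝ, Real.log S / (Im - Iμ) < γ →
      freeEnergy m W γ μ < freeEnergy m W γ m := by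
    intro γ hγ
    have hγ0 : 0 < γ := lt_of_le_of_lt (div_nonneg hL0 hD.le) hγ
    have hLD : Real.log S < γ * (Im - Iμ) := by
      have := (div_lt_iff₀ hD).mp hγ
      linarith [this]
    have hreal : γ⁻¹ * Eμ + Iμ < γ⁻¹ * 0 + Im := by
      have hinv : 0 < γ⁻¹ := inv_pos.mpr hγ0
      have hid : γ * γ⁻¹ = 1 := mul_inv_cancel₀ hγ0.ne'
      nlinarith [mul_le_mul_of_nonneg_left hElog hinv.le]
    have := EReal.coe_lt_coe_iff.mpr hreal
    rw [freeEnergy, freeEnergy, hentμ, hentm, ← hIμdef, ← hImdef,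
      ← EReal.coe_mul, ← EReal.coe_mul, ← EReal.coe_add, ← EReal.coe_add]
    exact this
  refine ⟨key, ⟨Real.log S / (Im - Iμ) + 1, ?_, ?_⟩⟩
  · have : 0 ≤ Real.log S / (Im - Iμ) := div_nonneg hL0 hD.le
    linarith
  · intro hall
    exact absurd (hall μ hμprob) (not_le.mpr (key _ (by linarith)))
end

section
/- Let (Ω, m) be a probability space, let u : Ω → ℝ be measurable with ∫ u dm = 0 and ‖u‖_∞ ≤ 1, and let 0 < ε < 1. Then the entropy of the density 1 + εu admits the Taylor bound 0 ≤ ∫ (1 + εu) log(1 + εu) dm − (ε²/2) ∫ u² dm + (ε³/6) ∫ u³ dm ≤ ε⁴ / (12 (1 − ε)³) · ∫ u⁴ dm. -/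
open MeasureTheory

lemma aux_mono {f f' : ℝ → ℝ} {a b : ℝ} (hab : a ≤ b)
    (hf : ∀ x ∈ Set.Icc a b, HasDerivAt f (f' x) x)
    (h0 : ∀ x ∈ Set.Icc a b, 0 ≤ f' x) : f a ≤ f b := by
  have hmono : MonotoneOn f (Set.Icc a b) :=
    monotoneOn_of_hasDerivWithinAt_nonneg (convex_Icc a b)
      (fun x hx => (hf x hx).continuousAt.continuousWithinAt)
      (fun x hx => (hf x (interior_subset hx)).hasDerivWithinAt)
      (fun x hx => h0 x (interior_subset hx))
  exact hmono (Set.left_mem_Icc.2 hab) (Set.right_mem_Icc.2 hab) hab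

lemma aux_anti {f f' : ℝ → ℝ} {a b : ℝ} (hab : a ≤ b)
    (hf : ∀ x ∈ Set.Icc a b, HasDerivAt f (f' x) x)
    (h0 : ∀ x ∈ Set.Icc a b, f' x ≤ 0) : f b ≤ f a := by
  have := aux_mono (f := fun x => -f x) (f' := fun x => -f' x) hab
    (fun x hx => (hf x hx).neg) (fun x hx => by simpa using h0 x hx)
  simpa using this

lemma hasDerivAt_log1p {s : ℝ} (hs : -1 < s) :
    HasDerivAt (fun s : ℝ => Real.log (1 + s)) (1 / (1 + s)) s := by
  have h := ((hasDerivAt_id s).const_add 1).log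
    (by intro h; simp only [id_eq] at h; linarith)
  simpa using h

/-- f1 s = log(1+s) - s + s^2/2 -/
noncomputable def f1 (s : ℝ) : ℝ := Real.log (1 + s) - s + s ^ 2 / 2

lemma f1_deriv {s : ℝ} (hs : -1 < s) :
    HasDerivAt f1 (1 / (1 + s) - 1 + s) s := by
  have h := ((hasDerivAt_log1p hs).sub (hasDerivAt_id s)).add
    ((hasDerivAt_pow 2 s).div_const 2)
  refine h.congr_deriv ?_
  try simp only [id_eq]
  push_cast
  ring

lemma f1_deriv_nonneg {s : ℝ} (hs : -1 < s) : 0 ≤ 1 / (1 + s) - 1 + s := by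
  have h : 0 < 1 + s := by linarith
  have : 1 / (1 + s) - 1 + s = s ^ 2 / (1 + s) := by field_simp; ring
  rw [this]; positivity

/-- log lower bound for t ≥ 0 -/
lemma logA {t : ℝ} (ht : 0 ≤ t) : 0 ≤ f1 t := by
  have h0 : f1 0 = 0 := by simp [f1]
  have := aux_mono (f := f1) (f' := fun s => 1 / (1 + s) - 1 + s) ht
    (fun x hx => f1_deriv (by have := hx.1; linarith))
    (fun x hx => by
      show 0 ≤ 1 / (1 + x) - 1 + x
      exact f1_deriv_nonneg (by have := hx.1; linarith))
  linarith

/-- log upper bound for -1 < t ≤ 0 -/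
lemma logB {t : ℝ} (ht1 : -1 < t) (ht : t ≤ 0) : f1 t ≤ 0 := by
  have h0 : f1 0 = 0 := by simp [f1]
  have := aux_mono (f := f1) (f' := fun s => 1 / (1 + s) - 1 + s) ht
    (fun x hx => f1_deriv (by have := hx.1; linarith))
    (fun x hx => by
      show 0 ≤ 1 / (1 + x) - 1 + x
      exact f1_deriv_nonneg (by have := hx.1; linarith))
  linarith

/-- f2 s = s - s²/2 + s³/3 - log(1+s); logC : f2 ≥ 0 on [0,∞) -/
noncomputable def f2 (s : ℝ) : ℝ := s - s ^ 2 / 2 + s ^ 3 / 3 - Real.log (1 + s)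

lemma f2_deriv {s : ℝ} (hs : -1 < s) :
    HasDerivAt f2 (1 - s + s ^ 2 - 1 / (1 + s)) s := by
  have h := (((hasDerivAt_id s).sub ((hasDerivAt_pow 2 s).div_const 2)).add
    ((hasDerivAt_pow 3 s).div_const 3)).sub (hasDerivAt_log1p hs)
  refine h.congr_deriv ?_
  try simp only [id_eq]
  push_cast
  ring

lemma logC {t : ℝ} (ht : 0 ≤ t) : 0 ≤ f2 t := by
  have h0 : f2 0 = 0 := by simp [f2]
  have := aux_mono (f := f2) (f' := fun s => 1 - s + s ^ 2 - 1 / (1 + s)) ht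
    (fun x hx => f2_deriv (by have := hx.1; linarith))
    (fun x hx => by
      have hx0 : 0 ≤ x := hx.1
      have h : 0 < 1 + x := by linarith
      show 0 ≤ 1 - x + x ^ 2 - 1 / (1 + x)
      have heq : 1 - x + x ^ 2 - 1 / (1 + x) = x ^ 3 / (1 + x) := by field_simp; ring
      rw [heq]; positivity)
  linarith

/-- φ t = (1+t) log(1+t) - t - t²/2 + t³/6 -/
noncomputable def phi (t : ℝ) : ℝ :=
  (1 + t) * Real.log (1 + t) - t - t ^ 2 / 2 + t ^ 3 / 6

lemma phi_deriv {s : ℝ} (hs : -1 < s) : HasDerivAt phi (f1 s) s := by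
  have hlog := hasDerivAt_log1p hs
  have h := ((((hasDerivAt_id s).const_add 1).mul hlog).sub (hasDerivAt_id s)).sub
    ((hasDerivAt_pow 2 s).div_const 2) |>.add ((hasDerivAt_pow 3 s).div_const 6)
  have h1 : (1 + s) ≠ 0 := by intro h; linarith
  refine h.congr_deriv ?_
  simp only [id_eq, f1]
  field_simp
  ring

lemma phi_nonneg {t : ℝ} (ht : -1 < t) : 0 ≤ phi t := by
  have h0 : phi 0 = 0 := by simp [phi]
  rcases le_or_gt 0 t with h | h
  · have := aux_mono (f := phi) (f' := f1) h
      (fun x hx => phi_deriv (by have := hx.1; linarith))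
      (fun x hx => logA hx.1)
    linarith
  · have := aux_anti (f := phi) (f' := f1) h.le
      (fun x hx => phi_deriv (by have := hx.1; linarith))
      (fun x hx => logB (by have := hx.1; linarith) hx.2)
    linarith

/-- upper bound for t ≥ 0 : phi t ≤ t⁴/12 -/
lemma phi_ub_pos {t : ℝ} (ht : 0 ≤ t) : phi t ≤ t ^ 4 / 12 := by
  have h0 : t ^ 4 / 12 - phi t ≥ 0 := by
    have := aux_mono (f := fun s => s ^ 4 / 12 - phi s)
      (f' := fun s => s ^ 3 / 3 - f1 s) ht
      (fun x hx => by
        have hx1 : -1 < x := by have := hx.1; linarith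
        exact ((hasDerivAt_pow 4 x).div_const 12 |>.sub (phi_deriv hx1)).congr_deriv
          (by push_cast; ring))
      (fun x hx => by
        show 0 ≤ x ^ 3 / 3 - f1 x
        have := logC hx.1
        simp only [f1, f2] at *
        linarith)
    have hphi0 : phi 0 = 0 := by simp [phi]
    linarith
  linarith

/-- m s = 2(1+s)log(1+s) - 2s - s² + s³/3 ; m ≥ 0 on (-1, 0] -/
noncomputable def mfun (s : ℝ) : ℝ :=
  2 * (1 + s) * Real.log (1 + s) - 2 * s - s ^ 2 + s ^ 3 / 3

lemma mfun_deriv {s : ℝ} (hs : -1 < s) : HasDerivAt mfun (2 * f1 s) s := by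
  have hlog := hasDerivAt_log1p hs
  have h := (((((hasDerivAt_id s).const_add 1).const_mul 2).mul hlog).sub
    ((hasDerivAt_id s).const_mul 2)).sub (hasDerivAt_pow 2 s) |>.add
    ((hasDerivAt_pow 3 s).div_const 3)
  have h1 : (1 + s) ≠ 0 := by intro h; linarith
  refine h.congr_deriv ?_
  simp only [id_eq, f1]
  field_simp
  ring

lemma mfun_nonneg {t : ℝ} (ht1 : -1 < t) (ht : t ≤ 0) : 0 ≤ mfun t := by
  have h0 : mfun 0 = 0 := by simp [mfun]
  have := aux_anti (f := mfun) (f' := fun s => 2 * f1 s) ht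
    (fun x hx => mfun_deriv (by have := hx.1; linarith))
    (fun x hx => by
      show 2 * f1 x ≤ 0
      have := logB (by have := hx.1; linarith) hx.2; linarith)
  linarith

/-- upper bound for -1 < t ≤ 0 : (1+t) * phi t ≤ t⁴/12 -/
lemma phi_ub_neg {t : ℝ} (ht1 : -1 < t) (ht : t ≤ 0) :
    (1 + t) * phi t ≤ t ^ 4 / 12 := by
  have key := aux_anti (f := fun s => s ^ 4 / 12 - (1 + s) * phi s)
    (f' := fun s => s ^ 3 / 3 - (phi s + (1 + s) * f1 s)) ht
    (fun x hx => by
      have hx1 : -1 < x := by have := hx.1; linarith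
      exact ((hasDerivAt_pow 4 x).div_const 12 |>.sub
        (((hasDerivAt_id x).const_add 1).mul (phi_deriv hx1))).congr_deriv
        (by simp only [id_eq]; push_cast; ring))
    (fun x hx => by
      have hx1 : -1 < x := by have := hx.1; linarith
      show x ^ 3 / 3 - (phi x + (1 + x) * f1 x) ≤ 0
      have hm := mfun_nonneg hx1 hx.2
      simp only [mfun, phi, f1] at *
      nlinarith)
  have hphi0 : phi 0 = 0 := by simp [phi]
  linarith

/-- combined pointwise bound -/
lemma phi_bound {t ε : ℝ} (hε0 : 0 < ε) (hε1 : ε < 1) (ht : |t| ≤ ε) :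
    phi t ≤ t ^ 4 / (12 * (1 - ε) ^ 3) := by
  have habs := abs_le.1 ht
  have ht1 : -1 < t := by linarith [habs.1]
  have hden : (0:ℝ) < 1 - ε := by linarith
  have hd3 : (0:ℝ) < (1 - ε) ^ 3 := by positivity
  have hsq : (1 - ε) ^ 2 ≤ 1 := by nlinarith
  have hd3le : (1 - ε) ^ 3 ≤ 1 - ε := by nlinarith
  rcases le_or_gt 0 t with h | h
  · have := phi_ub_pos h
    have h1 : t ^ 4 / 12 ≤ t ^ 4 / (12 * (1 - ε) ^ 3) := by
      apply div_le_div_of_nonneg_left (by positivity) (by positivity)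
      nlinarith
    linarith
  · have hub := phi_ub_neg ht1 h.le
    have h1t : 0 < 1 + t := by linarith
    have h1e : 1 - ε ≤ 1 + t := by linarith [habs.1]
    have : phi t ≤ t ^ 4 / (12 * (1 + t)) := by
      rw [le_div_iff₀ (by positivity)]
      nlinarith [phi_nonneg ht1]
    have h2 : t ^ 4 / (12 * (1 + t)) ≤ t ^ 4 / (12 * (1 - ε) ^ 3) := by
      apply div_le_div_of_nonneg_left (by positivity) (by positivity)
      nlinarith
    linarith


/-- Taylor bound for the entropy of the density `1 + εu` on a probability space, where
`∫ u dm = 0`, `‖u‖_∞ ≤ 1` and `0 < ε < 1`. -/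
theorem stmt16 {Ω : Type*} [MeasurableSpace Ω] (m : Measure Ω) [IsProbabilityMeasure m]
    (u : Ω → ℝ) (hmeas : Measurable u) (hbdd : ∀ᵐ x ∂m, |u x| ≤ 1)
    (hzero : ∫ x, u x ∂m = 0) (ε : ℝ) (hε0 : 0 < ε) (hε1 : ε < 1) :
    0 ≤ (∫ x, (1 + ε * u x) * Real.log (1 + ε * u x) ∂m)
        - ε ^ 2 / 2 * ∫ x, u x ^ 2 ∂m + ε ^ 3 / 6 * ∫ x, u x ^ 3 ∂m ∧
    (∫ x, (1 + ε * u x) * Real.log (1 + ε * u x) ∂m)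
        - ε ^ 2 / 2 * ∫ x, u x ^ 2 ∂m + ε ^ 3 / 6 * ∫ x, u x ^ 3 ∂m
      ≤ ε ^ 4 / (12 * (1 - ε) ^ 3) * ∫ x, u x ^ 4 ∂m := by
  -- a.e. bound on ε * u
  have hbdd' : ∀ᵐ x ∂m, |ε * u x| ≤ ε := by
    filter_upwards [hbdd] with x hx
    rw [abs_mul, abs_of_pos hε0]
    nlinarith [abs_nonneg (u x)]
  -- integrability of powers of u
  have hint_pow : ∀ n : ℕ, Integrable (fun x => u x ^ n) m := by
    intro n
    apply Integrable.mono' (integrable_const (1:ℝ)) ((hmeas.pow_const n).aestronglyMeasurable)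
    filter_upwards [hbdd] with x hx
    rw [Real.norm_eq_abs, abs_pow]
    exact pow_le_one₀ (abs_nonneg _) hx
  have hint_u : Integrable u m := by simpa using hint_pow 1
  -- integrability of the entropy integrand
  have hg_meas : Measurable (fun x => (1 + ε * u x) * Real.log (1 + ε * u x)) :=
    ((measurable_const.add (measurable_const.mul hmeas)).mul
      ((measurable_const.add (measurable_const.mul hmeas)).log))
  have hg_int : Integrable (fun x => (1 + ε * u x) * Real.log (1 + ε * u x)) m := by
    apply Integrable.mono' (integrable_const (2 * |Real.log (1 - ε)| + 2))
      hg_meas.aestronglyMeasurable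
    filter_upwards [hbdd'] with x hx
    have habs := abs_le.1 hx
    have h1 : 1 - ε ≤ 1 + ε * u x := by linarith [habs.1]
    have h2 : 1 + ε * u x ≤ 1 + ε := by linarith [habs.2]
    have hpos : 0 < 1 + ε * u x := by linarith
    rw [Real.norm_eq_abs, abs_mul]
    have hb1 : |1 + ε * u x| ≤ 2 := by rw [abs_of_pos hpos]; linarith
    have hb2 : |Real.log (1 + ε * u x)| ≤ |Real.log (1 - ε)| + 1 := by
      rcases le_or_gt (Real.log (1 + ε * u x)) 0 with hl | hl
      · rw [abs_of_nonpos hl]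
        have := Real.log_le_log (by linarith) h1
        have hneg : Real.log (1 - ε) ≤ 0 := Real.log_nonpos (by linarith) (by linarith)
        rw [abs_of_nonpos hneg]; linarith
      · rw [abs_of_pos hl]
        have := Real.log_le_log hpos h2
        have : Real.log (1 + ε * u x) ≤ Real.log 2 := by
          calc Real.log (1 + ε * u x) ≤ Real.log (1 + ε) := Real.log_le_log hpos h2
          _ ≤ Real.log 2 := Real.log_le_log (by linarith) (by linarith)
        have hlog2 : Real.log 2 < 1 := by
          have := Real.log_two_lt_d9; linarith
        have := abs_nonneg (Real.log (1 - ε))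
        linarith
    calc |1 + ε * u x| * |Real.log (1 + ε * u x)| ≤ 2 * (|Real.log (1 - ε)| + 1) := by
          apply mul_le_mul hb1 hb2 (abs_nonneg _) (by norm_num)
      _ = 2 * |Real.log (1 - ε)| + 2 := by ring
  -- the remainder function h x = phi (ε u x)
  have hphi_meas : Measurable (fun x => phi (ε * u x)) := by
    unfold phi
    fun_prop
  have hrem_eq : ∀ x, phi (ε * u x) =
      (1 + ε * u x) * Real.log (1 + ε * u x) - ε * u x
        - ε ^ 2 / 2 * u x ^ 2 + ε ^ 3 / 6 * u x ^ 3 := by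
    intro x; simp only [phi]; ring
  have hi_u : Integrable (fun x => ε * u x) m := hint_u.const_mul ε
  have hi2 : Integrable (fun x => ε ^ 2 / 2 * u x ^ 2) m := (hint_pow 2).const_mul _
  have hi3 : Integrable (fun x => ε ^ 3 / 6 * u x ^ 3) m := (hint_pow 3).const_mul _
  have i1 : Integrable (fun x =>
      (1 + ε * u x) * Real.log (1 + ε * u x) - ε * u x) m := hg_int.sub hi_u
  have i2 : Integrable (fun x =>
      (1 + ε * u x) * Real.log (1 + ε * u x) - ε * u x - ε ^ 2 / 2 * u x ^ 2) m :=
    i1.sub hi2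
  have hphi_int : Integrable (fun x => phi (ε * u x)) m := by
    have heq : (fun x => phi (ε * u x)) = fun x =>
        (1 + ε * u x) * Real.log (1 + ε * u x) - ε * u x
          - ε ^ 2 / 2 * u x ^ 2 + ε ^ 3 / 6 * u x ^ 3 := funext hrem_eq
    rw [heq]
    exact i2.add hi3
  -- integral identity
  have hkey : ∫ x, phi (ε * u x) ∂m =
      (∫ x, (1 + ε * u x) * Real.log (1 + ε * u x) ∂m)
        - ε ^ 2 / 2 * ∫ x, u x ^ 2 ∂m + ε ^ 3 / 6 * ∫ x, u x ^ 3 ∂m := by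
    have heq : (fun x => phi (ε * u x)) = fun x =>
        (1 + ε * u x) * Real.log (1 + ε * u x) - ε * u x
          - ε ^ 2 / 2 * u x ^ 2 + ε ^ 3 / 6 * u x ^ 3 := funext hrem_eq
    rw [heq, integral_add i2 hi3, integral_sub i1 hi2, integral_sub hg_int hi_u,
      integral_const_mul, integral_const_mul, integral_const_mul, hzero]
    ring
  constructor
  · rw [← hkey]
    apply integral_nonneg_of_ae
    filter_upwards [hbdd'] with x hx
    exact phi_nonneg (by linarith [(abs_le.1 hx).1])
  · rw [← hkey]
    have hb : ∀ᵐ x ∂m, phi (ε * u x) ≤ ε ^ 4 / (12 * (1 - ε) ^ 3) * u x ^ 4 := by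
      filter_upwards [hbdd'] with x hx
      have := phi_bound hε0 hε1 hx
      calc phi (ε * u x) ≤ (ε * u x) ^ 4 / (12 * (1 - ε) ^ 3) := this
        _ = ε ^ 4 / (12 * (1 - ε) ^ 3) * u x ^ 4 := by ring
    calc ∫ x, phi (ε * u x) ∂m ≤ ∫ x, ε ^ 4 / (12 * (1 - ε) ^ 3) * u x ^ 4 ∂m :=
          integral_mono_ae hphi_int ((hint_pow 4).const_mul _) hb
      _ = ε ^ 4 / (12 * (1 - ε) ^ 3) * ∫ x, u x ^ 4 ∂m := integral_const_mul _ _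
end
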